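/- arXiv:1505.05109 — 8 statements merged into one kernel-verified Lean document; each statement's English description precedes it below -/
import Mathlib

section
/- Let L be a finite lattice with least element 0 and let T be a CD-base of L. Order orthogonal systems of L by: S₁ ≤ S₂ iff for each a ∈ S₁ there exists b ∈ S₂ with a ≤ b. Then there exists a family {S_λ : λ ∈ Λ} of orthogonal systems of L that is totally ordered by this relation (a chain in Ort(L)) such that T ∖ {0} = ⋃_{λ∈Λ} S_λ. In particular, every CD-base is the union of the orthogonal systems belonging to such a chain. -/
/-- A subset `X` of a lattice with least element `⊥` is CD-independent if any two of its
elements are comparable or disjoint (meet `⊥`). -/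
def CDIndependent {L : Type*} [Lattice L] [OrderBot L] (X : Set L) : Prop :=
  ∀ x ∈ X, ∀ y ∈ X, x ≤ y ∨ y ≤ x ∨ x ⊓ y = ⊥

/-- A CD-base is a CD-independent set maximal with respect to inclusion. -/
def IsCDBase {L : Type*} [Lattice L] [OrderBot L] (T : Set L) : Prop :=
  CDIndependent T ∧ ∀ X : Set L, CDIndependent X → T ⊆ X → X = T

/-- An orthogonal system: a nonempty set of nonzero elements, pairwise disjoint. -/
def IsOrthoSystem {L : Type*} [Lattice L] [OrderBot L] (O : Set L) : Prop :=
  O.Nonempty ∧ (∀ a ∈ O, a ≠ ⊥) ∧ ∀ a ∈ O, ∀ b ∈ O, a ≠ b → a ⊓ b = ⊥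

/-- The ordering of orthogonal systems: `S₁ ≤ S₂` iff every element of `S₁`
lies below some element of `S₂`. -/
def orthoLE {L : Type*} [Lattice L] (S₁ S₂ : Set L) : Prop :=
  ∀ a ∈ S₁, ∃ b ∈ S₂, a ≤ b

/-!
Grade the nonzero part `X` of the CD-base by depth: the depth of `x` is the number of elements of
`X` above `x`. Above a nonzero `x` any two elements of `X` meet nontrivially, so they form a chain,
on which depth is strictly antitone; hence the chain realises every depth `1, …, depth x`. The level
sets of the depth are therefore orthogonal systems (distinct elements of one level are
incomparable, hence disjoint), each level refines every lower level, and together they cover `X`.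
-/

open Set

noncomputable def depth {α : Type*} [Preorder α] (X : Set α) (x : α) : ℕ :=
  (X ∩ Ici x).ncard

def depthLevel {α : Type*} [Preorder α] (X : Set α) (k : ℕ) : Set α :=
  {x ∈ X | depth X x = k}

section PartialOrder

variable {α : Type*} [PartialOrder α] {X : Set α} {x y : α}

theorem depth_le_depth_of_le (hX : X.Finite) (h : x ≤ y) : depth X y ≤ depth X x :=
  ncard_le_ncard (inter_subset_inter_right X (Ici_subset_Ici.2 h)) (hX.inter_of_left _)

theorem depth_lt_depth_of_lt (hX : X.Finite) (hx : x ∈ X) (h : x < y) :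
    depth X y < depth X x := by
  refine ncard_lt_ncard ?_ (hX.inter_of_left _)
  refine ssubset_iff_subset_ne.2 ⟨inter_subset_inter_right X (Ici_subset_Ici.2 h.le), ?_⟩
  intro heq
  have hxy : x ∈ X ∩ Ici y := heq ▸ ⟨hx, le_rfl⟩
  exact h.not_ge hxy.2

theorem depth_pos (hX : X.Finite) (hx : x ∈ X) : 0 < depth X x :=
  (ncard_pos (hX.inter_of_left _)).2 ⟨x, hx, le_rfl⟩

theorem eq_of_le_of_mem_depthLevel {k : ℕ} (hX : X.Finite) (hx : x ∈ depthLevel X k)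
    (hy : y ∈ depthLevel X k) (h : x ≤ y) : x = y := by
  by_contra hne
  have := depth_lt_depth_of_lt hX hx.1 (h.lt_of_ne hne)
  rw [hx.2, hy.2] at this
  exact this.false

theorem depth_injOn_inter_Ici (hX : X.Finite) (hchain : IsChain (· ≤ ·) (X ∩ Ici x)) :
    InjOn (depth X) (X ∩ Ici x) := by
  intro y hy z hz hyz
  rcases hchain.total hy hz with h | h
  · exact eq_of_le_of_mem_depthLevel hX ⟨hy.1, hyz⟩ ⟨hz.1, rfl⟩ h
  · exact (eq_of_le_of_mem_depthLevel hX ⟨hz.1, rfl⟩ ⟨hy.1, hyz⟩ h).symm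

theorem image_depth_inter_Ici (hX : X.Finite)
    (hchain : IsChain (· ≤ ·) (X ∩ Ici x)) :
    depth X '' (X ∩ Ici x) = Icc 1 (depth X x) := by
  refine eq_of_subset_of_ncard_le ?_ ?_ (finite_Icc _ _)
  · rintro _ ⟨y, hy, rfl⟩
    exact ⟨depth_pos hX hy.1, depth_le_depth_of_le hX hy.2⟩
  · rw [ncard_Icc_nat, (depth_injOn_inter_Ici hX hchain).ncard_image, Nat.add_sub_cancel]
    exact le_rfl

theorem exists_ge_depth_eq (hX : X.Finite)
    (hchain : IsChain (· ≤ ·) (X ∩ Ici x)) {k : ℕ} (hk : 0 < k) (hkx : k ≤ depth X x) :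
    ∃ y ∈ X, x ≤ y ∧ depth X y = k := by
  obtain ⟨y, ⟨hyX, hxy⟩, hy⟩ : k ∈ depth X '' (X ∩ Ici x) := by
    rw [image_depth_inter_Ici hX hchain]
    exact ⟨hk, hkx⟩
  exact ⟨y, hyX, hxy, hy⟩

theorem sUnion_image_depthLevel (X : Set α) :
    ⋃₀ ((fun x => depthLevel X (depth X x)) '' X) = X := by
  ext x
  constructor
  · rintro ⟨_, ⟨y, -, rfl⟩, hx⟩
    exact hx.1
  · intro hx
    exact ⟨_, mem_image_of_mem _ hx, hx, rfl⟩

end PartialOrder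

section CDIndependent

variable {L : Type*} [Lattice L] [OrderBot L] {X Y : Set L} {x : L}

theorem CDIndependent.mono (hX : CDIndependent X) (hYX : Y ⊆ X) : CDIndependent Y :=
  fun x hx y hy => hX x (hYX hx) y (hYX hy)

theorem CDIndependent.isChain_inter_Ici (hX : CDIndependent X) (hx : x ≠ ⊥) :
    IsChain (· ≤ ·) (X ∩ Ici x) := by
  intro y hy z hz _
  rcases hX y hy.1 z hz.1 with h | h | h
  · exact Or.inl h
  · exact Or.inr h
  · exact absurd (eq_bot_iff.2 (h ▸ le_inf hy.2 hz.2)) hx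

theorem CDIndependent.isOrthoSystem_depthLevel (hX : CDIndependent X) (hbot : ⊥ ∉ X)
    (hfin : X.Finite) (hx : x ∈ X) : IsOrthoSystem (depthLevel X (depth X x)) := by
  refine ⟨⟨x, hx, rfl⟩, fun a ha h => hbot (h ▸ ha.1), fun a ha b hb hab => ?_⟩
  rcases hX a ha.1 b hb.1 with h | h | h
  · exact absurd (eq_of_le_of_mem_depthLevel hfin ha hb h) hab
  · exact absurd (eq_of_le_of_mem_depthLevel hfin hb ha h).symm hab
  · exact h

theorem CDIndependent.orthoLE_depthLevel (hX : CDIndependent X) (hbot : ⊥ ∉ X)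
    (hfin : X.Finite) {j k : ℕ} (hj : 0 < j) (hjk : j ≤ k) :
    orthoLE (depthLevel X k) (depthLevel X j) := by
  intro a ha
  have hchain := hX.isChain_inter_Ici fun h => hbot (h ▸ ha.1)
  obtain ⟨b, hb, hab, hbj⟩ := exists_ge_depth_eq hfin hchain hj (ha.2 ▸ hjk)
  exact ⟨b, ⟨hb, hbj⟩, hab⟩

theorem CDIndependent.isChain_orthoLE_depthLevel (hX : CDIndependent X) (hbot : ⊥ ∉ X)
    (hfin : X.Finite) : IsChain orthoLE ((fun x => depthLevel X (depth X x)) '' X) := by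
  rintro _ ⟨x, hx, rfl⟩ _ ⟨y, hy, rfl⟩ -
  rcases le_total (depth X x) (depth X y) with h | h
  · exact Or.inr (hX.orthoLE_depthLevel hbot hfin (depth_pos hfin hx) h)
  · exact Or.inl (hX.orthoLE_depthLevel hbot hfin (depth_pos hfin hy) h)

end CDIndependent

/-- Every CD-base of a finite lattice with least element is, after removing `⊥`, the
union of a chain (w.r.t. `orthoLE`) of orthogonal systems. -/
theorem cdbase_union_of_chain_of_orthosystems
    {L : Type*} [Lattice L] [OrderBot L] [Fintype L]
    (T : Set L) (hT : IsCDBase T) :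
    ∃ C : Set (Set L), (∀ S ∈ C, IsOrthoSystem S) ∧ IsChain orthoLE C ∧
      T \ {⊥} = ⋃₀ C := by
  set X := T \ {⊥}
  have hX : CDIndependent X := hT.1.mono sdiff_subset
  have hbot : ⊥ ∉ X := fun h => h.2 rfl
  refine ⟨(fun x => depthLevel X (depth X x)) '' X, ?_,
    hX.isChain_orthoLE_depthLevel hbot X.toFinite, (sUnion_image_depthLevel X).symm⟩
  rintro _ ⟨x, hx, rfl⟩
  exact hX.isOrthoSystem_depthLevel hbot X.toFinite hx
end

section
/- Let L be a bounded lattice, T a classification tree in L, and S a set of atoms of L. Then T ∪ S is a classification tree in L. -/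
/-- A classification tree in a bounded lattice: a set of nonzero elements such that for
every nonzero `x` the set `{t ∈ T | x ≤ t}` is a nonempty chain. -/
def IsClassTree {L : Type*} [Lattice L] [BoundedOrder L] (T : Set L) : Prop :=
  (∀ t ∈ T, t ≠ ⊥) ∧ ∀ x : L, x ≠ ⊥ →
    ({t ∈ T | x ≤ t}.Nonempty ∧ IsChain (· ≤ ·) {t ∈ T | x ≤ t})

/-- Adding any set of atoms to a classification tree yields a classification tree. -/
theorem classTree_union_atoms
    {L : Type*} [Lattice L] [BoundedOrder L]
    (T S : Set L) (hT : IsClassTree T) (hS : ∀ a ∈ S, IsAtom a) :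
    IsClassTree (T ∪ S) := by
  obtain ⟨hT0, hTx⟩ := hT
  constructor
  · rintro t (ht | ht)
    · exact hT0 t ht
    · exact (hS t ht).1
  · intro x hx
    obtain ⟨⟨t0, ht0T, ht0x⟩, hchain⟩ := hTx x hx
    constructor
    · exact ⟨t0, Or.inl ht0T, ht0x⟩
    · -- key: if a ∈ S and x ≤ a then x = a
      have key : ∀ a ∈ S, x ≤ a → x = a := fun a ha hxa =>
        ((hS a ha).le_iff.mp hxa).resolve_left hx
      rintro u ⟨(hu | hu), hxu⟩ v ⟨(hv | hv), hxv⟩ huv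
      · exact hchain ⟨hu, hxu⟩ ⟨hv, hxv⟩ huv
      · exact Or.inr ((key v hv hxv ▸ hxu))
      · exact Or.inl ((key u hu hxu ▸ hxv))
      · exact absurd ((key u hu hxu).symm.trans (key v hv hxv)) huv
end

section
/- Let (G,M,I) be a finite context with ∅'' = ∅ and let T be a set of nonempty extents of (G,M,I). Then the following are equivalent: (i) T is a complete classification tree (in the lattice of extents of (G,M,I) ordered by inclusion); (ii) every member of T is a box extent, T is a classification tree in the box extent lattice B(G,M,I), and every maximal antichain of (T, ⊆) is a maximal orthogonal system in B(G,M,I), i.e., a family of pairwise disjoint nonempty box extents that cannot be enlarged by any further nonempty box extent disjoint from all of its members. -/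
open Set

variable {G M : Type*}

/-- The attribute-derivation `A'` of a set of objects (the restricted relation of a
subcontext agrees with `I` on its object set, so no restriction is needed here). -/
def polarUp (I : G → M → Prop) (A : Set G) : Set M := {m | ∀ g ∈ A, I g m}

/-- The object-derivation `B'` of a set of attributes, computed in the subcontext whose
object set is `H` (relation `I ∩ H×M`). -/
def polarDown (I : G → M → Prop) (H : Set G) (B : Set M) : Set G :=
  {g | g ∈ H ∧ ∀ m ∈ B, I g m}

/-- The closure `A''` computed in the subcontext with object set `H`.
Taking `H = Set.univ` gives the closure in the full context `(G,M,I)`. -/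
def cl2 (I : G → M → Prop) (H A : Set G) : Set G := polarDown I H (polarUp I A)

/-- `A` is an extent of the subcontext with object set `H`. -/
def IsExtent (I : G → M → Prop) (H A : Set G) : Prop := A ⊆ H ∧ cl2 I H A = A

/-- An extent partition of the subcontext with object set `H`: a partition of `H`
all of whose classes are extents. -/
def IsExtentPartition (I : G → M → Prop) (H : Set G) (π : Set (Set G)) : Prop :=
  (∀ A ∈ π, A.Nonempty) ∧ π.Pairwise Disjoint ∧ ⋃₀ π = H ∧ ∀ A ∈ π, IsExtent I H A

/-- `E` is a box extent of the subcontext with object set `H`: a class of some extent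
partition, or `∅''`. -/
def IsBoxExtent (I : G → M → Prop) (H E : Set G) : Prop :=
  (∃ π : Set (Set G), IsExtentPartition I H π ∧ E ∈ π) ∨ E = cl2 I H ∅

/-- The finest extent partition: every class of every extent partition is a union of
its classes. -/
def IsFinestExtentPartition (I : G → M → Prop) (H : Set G) (π : Set (Set G)) : Prop :=
  IsExtentPartition I H π ∧
    ∀ σ : Set (Set G), IsExtentPartition I H σ → ∀ A ∈ σ, ∃ S ⊆ π, A = ⋃₀ S

/-- A classification tree in the box extent lattice of the subcontext with object set
`H`: a set of nonempty box extents such that for every nonempty box extent `X`,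
`{E ∈ T | X ⊆ E}` is a nonempty chain under inclusion. -/
def IsBoxClassTree (I : G → M → Prop) (H : Set G) (T : Set (Set G)) : Prop :=
  (∀ E ∈ T, E.Nonempty ∧ IsBoxExtent I H E) ∧
  ∀ X : Set G, X.Nonempty → IsBoxExtent I H X →
    ({E ∈ T | X ⊆ E}.Nonempty ∧ IsChain (· ⊆ ·) {E ∈ T | X ⊆ E})

/-- A maximal classification tree in the box extent lattice. -/
def IsMaxBoxClassTree (I : G → M → Prop) (H : Set G) (T : Set (Set G)) : Prop :=
  IsBoxClassTree I H T ∧ ∀ T' : Set (Set G), IsBoxClassTree I H T' → T ⊆ T' → T' = T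

/-- A classification tree in the lattice of extents of the full context `(G,M,I)`:
a set of nonempty extents such that for every nonempty extent `X`, `{E ∈ T | X ⊆ E}`
is a nonempty chain under inclusion. -/
def IsExtClassTree (I : G → M → Prop) (T : Set (Set G)) : Prop :=
  (∀ E ∈ T, E.Nonempty ∧ IsExtent I Set.univ E) ∧
  ∀ X : Set G, X.Nonempty → IsExtent I Set.univ X →
    ({E ∈ T | X ⊆ E}.Nonempty ∧ IsChain (· ⊆ ·) {E ∈ T | X ⊆ E})

/-- `A` is a maximal antichain of `(T, ⊆)`. -/
def IsMaxAntichainIn (T A : Set (Set G)) : Prop :=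
  A ⊆ T ∧ IsAntichain (· ⊆ ·) A ∧
    ∀ B : Set (Set G), B ⊆ T → A ⊆ B → IsAntichain (· ⊆ ·) B → B = A

/-- A complete classification tree in the lattice of extents: every maximal antichain
of `(T, ⊆)` covers `G`. -/
def IsCompleteExtClassTree (I : G → M → Prop) (T : Set (Set G)) : Prop :=
  IsExtClassTree I T ∧
    ∀ A : Set (Set G), IsMaxAntichainIn T A → ⋃₀ A = Set.univ

/-- A maximal orthogonal system in the box extent lattice `B(G,M,I)`: a family of
pairwise disjoint nonempty box extents that cannot be enlarged by any further
nonempty box extent disjoint from all of its members. -/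
def IsMaxOrthoSystem (I : G → M → Prop) (A : Set (Set G)) : Prop :=
  (∀ E ∈ A, E.Nonempty ∧ IsBoxExtent I Set.univ E) ∧ A.Pairwise Disjoint ∧
    ∀ E : Set G, E.Nonempty → IsBoxExtent I Set.univ E →
      (∀ F ∈ A, Disjoint E F) → False

/-!
In a classification tree of extents, two members that meet are comparable, because their
intersection is again an extent; so a maximal antichain is a family of pairwise disjoint
extents, and it covers `G` exactly when it is an extent partition, whose classes are box
extents forming a maximal orthogonal system. Conversely, nonempty intersections of box extents
are box extents (classes of the common refinement of the partitions involved). If a maximal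
orthogonal system `A` missed a point `g`, then intersecting, over all `F ∈ A`, the class of `g`
in a partition having `F` as a class would give a box extent containing `g` and disjoint from
every member of `A`.
-/

section BoxExtents

variable {I : G → M → Prop}

theorem cl2_univ_eq (A : Set G) : cl2 I univ A = lowerPolar I (upperPolar I A) := by
  ext g
  simp [cl2, polarDown, polarUp, lowerPolar, upperPolar]

theorem isExtent_univ_iff {A : Set G} : IsExtent I univ A ↔ Order.IsExtent I A := by
  rw [Order.isExtent_iff, IsExtent, cl2_univ_eq]
  exact and_iff_right (subset_univ A)

theorem IsExtentPartition.exists_mem {H : Set G} {π : Set (Set G)} (hπ : IsExtentPartition I H π)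
    {x : G} (hx : x ∈ H) : ∃ A ∈ π, x ∈ A := by
  rw [← hπ.2.2.1] at hx
  exact hx

theorem IsExtentPartition.eq_of_mem_of_mem {H : Set G} {π : Set (Set G)}
    (hπ : IsExtentPartition I H π) {A B : Set G} (hA : A ∈ π) (hB : B ∈ π) {x : G}
    (hxA : x ∈ A) (hxB : x ∈ B) : A = B := by
  by_contra hne
  exact disjoint_left.1 (hπ.2.1 hA hB hne) hxA hxB

theorem IsExtentPartition.isMaxOrthoSystem {π : Set (Set G)}
    (hπ : IsExtentPartition I univ π) : IsMaxOrthoSystem I π := by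
  refine ⟨fun E hE => ⟨hπ.1 E hE, Or.inl ⟨π, hπ, hE⟩⟩, hπ.2.1, ?_⟩
  rintro E ⟨g, hg⟩ - hdisj
  obtain ⟨F, hF, hgF⟩ := hπ.exists_mem (mem_univ g)
  exact disjoint_left.1 (hdisj F hF) hg hgF

def commonRefinement {ι : Type*} (σ : ι → Set (Set G)) : Set (Set G) :=
  {C | C.Nonempty ∧ ∃ f : ι → Set G, (∀ i, f i ∈ σ i) ∧ C = ⋂ i, f i}

theorem IsExtentPartition.commonRefinement {ι : Type*} {σ : ι → Set (Set G)}
    (hσ : ∀ i, IsExtentPartition I univ (σ i)) :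
    IsExtentPartition I univ (commonRefinement σ) := by
  refine ⟨fun C hC => hC.1, ?_, ?_, ?_⟩
  · rintro _ ⟨-, f, hf, rfl⟩ _ ⟨-, f', hf', rfl⟩ hne
    by_contra hmeet
    obtain ⟨x, hx, hx'⟩ := not_disjoint_iff.1 hmeet
    refine hne (congrArg _ (funext fun i => ?_))
    exact (hσ i).eq_of_mem_of_mem (hf i) (hf' i) (mem_iInter.1 hx i) (mem_iInter.1 hx' i)
  · refine eq_univ_of_forall fun x => ?_
    choose f hf hxf using fun i => (hσ i).exists_mem (mem_univ x)
    exact ⟨⋂ i, f i, ⟨⟨x, mem_iInter.2 hxf⟩, f, hf, rfl⟩, mem_iInter.2 hxf⟩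
  · rintro _ ⟨-, f, hf, rfl⟩
    exact isExtent_univ_iff.2 <|
      Order.IsExtent.iInter f fun i => isExtent_univ_iff.1 (((hσ i).2.2.2) (f i) (hf i))

theorem IsBoxExtent.isExtent {E : Set G} (hE : IsBoxExtent I univ E) : IsExtent I univ E := by
  rcases hE with ⟨π, hπ, hEπ⟩ | rfl
  · exact hπ.2.2.2 E hEπ
  · rw [isExtent_univ_iff, cl2_univ_eq]
    exact Order.isExtent_lowerPolar

theorem isBoxExtent_univ (hG : (univ : Set G).Nonempty) : IsBoxExtent I univ univ := by
  refine Or.inl ⟨{univ}, ⟨?_, pairwise_singleton _ _, sUnion_singleton _, ?_⟩, rfl⟩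
  · rintro _ rfl
    exact hG
  · rintro _ rfl
    exact isExtent_univ_iff.2 Order.IsExtent.univ

theorem IsBoxExtent.iInter (hempty : cl2 I univ (∅ : Set G) = ∅) {ι : Type*} {D : ι → Set G}
    (hD : ∀ i, IsBoxExtent I univ (D i)) (hne : (⋂ i, D i).Nonempty) :
    IsBoxExtent I univ (⋂ i, D i) := by
  have hpart : ∀ i, ∃ σ, IsExtentPartition I univ σ ∧ D i ∈ σ := by
    intro i
    refine (hD i).resolve_right fun hDi => ?_
    obtain ⟨g, hg⟩ := hne
    simpa [hDi, hempty] using mem_iInter.1 hg i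
  choose σ hσ hDσ using hpart
  exact Or.inl ⟨commonRefinement σ, IsExtentPartition.commonRefinement hσ, hne, D, hDσ, rfl⟩

theorem IsBoxExtent.inter (hempty : cl2 I univ (∅ : Set G) = ∅) {E F : Set G}
    (hE : IsBoxExtent I univ E) (hF : IsBoxExtent I univ F) (hne : (E ∩ F).Nonempty) :
    IsBoxExtent I univ (E ∩ F) := by
  rw [inter_eq_iInter] at hne ⊢
  exact IsBoxExtent.iInter hempty (fun b => by cases b <;> assumption) hne

theorem IsMaxOrthoSystem.sUnion_eq_univ (hempty : cl2 I univ (∅ : Set G) = ∅)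
    {A : Set (Set G)} (hA : IsMaxOrthoSystem I A) : ⋃₀ A = univ := by
  refine eq_univ_of_forall fun g => ?_
  by_contra hg
  have hclass : ∀ F : A, ∃ D, IsBoxExtent I univ D ∧ g ∈ D ∧ Disjoint D F := by
    rintro ⟨F, hF⟩
    obtain ⟨σ, hσ, hFσ⟩ : ∃ σ, IsExtentPartition I univ σ ∧ F ∈ σ := by
      refine (hA.1 F hF).2.resolve_right fun hFe => ?_
      simpa [hFe, hempty] using (hA.1 F hF).1
    obtain ⟨D, hDσ, hgD⟩ := hσ.exists_mem (mem_univ g)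
    have hDF : D ≠ F := by
      rintro rfl
      exact hg ⟨D, hF, hgD⟩
    exact ⟨D, Or.inl ⟨σ, hσ, hDσ⟩, hgD, hσ.2.1 hDσ hFσ hDF⟩
  choose D hDbox hgD hDF using hclass
  refine hA.2.2 (⋂ F, D F) ⟨g, mem_iInter.2 hgD⟩
    (IsBoxExtent.iInter hempty hDbox ⟨g, mem_iInter.2 hgD⟩) fun F hF => ?_
  exact (hDF ⟨F, hF⟩).mono_left (iInter_subset _ _)

end BoxExtents

section ClassTrees

variable {I : G → M → Prop} {T : Set (Set G)}

theorem exists_isMaxAntichainIn_mem {E : Set G} (hE : E ∈ T) :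
    ∃ A, IsMaxAntichainIn T A ∧ E ∈ A := by
  have hchain_ub : ∀ c ⊆ {B | B ⊆ T ∧ IsAntichain (· ⊆ ·) B}, IsChain (· ⊆ ·) c → c.Nonempty →
      ∃ ub ∈ {B | B ⊆ T ∧ IsAntichain (· ⊆ ·) B}, ∀ B ∈ c, B ⊆ ub := by
    intro c hc hchain _
    refine ⟨⋃₀ c, ⟨sUnion_subset fun B hB => (hc hB).1, ?_⟩, fun _ => subset_sUnion_of_mem⟩
    exact (pairwise_sUnion hchain.directedOn).2 fun B hB => (hc hB).2
  obtain ⟨A, hEA, hA⟩ := zorn_subset_nonempty _ hchain_ub {E}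
    ⟨singleton_subset_iff.2 hE, IsAntichain.singleton⟩
  exact ⟨A, ⟨hA.prop.1, hA.prop.2, fun B hBT hAB hB => (hA.eq_of_subset ⟨hBT, hB⟩ hAB).symm⟩,
    hEA rfl⟩

theorem IsExtClassTree.isExtentPartition {A : Set (Set G)} (hT : IsExtClassTree I T)
    (hA : IsMaxAntichainIn T A) (hcov : ⋃₀ A = univ) : IsExtentPartition I univ A := by
  refine ⟨fun F hF => (hT.1 F (hA.1 hF)).1, ?_, hcov, fun F hF => (hT.1 F (hA.1 hF)).2⟩
  intro E hE F hF hne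
  by_contra hmeet
  rw [not_disjoint_iff_nonempty_inter] at hmeet
  have hext : IsExtent I univ (E ∩ F) := isExtent_univ_iff.2 <|
    (isExtent_univ_iff.1 (hT.1 E (hA.1 hE)).2).inter (isExtent_univ_iff.1 (hT.1 F (hA.1 hF)).2)
  rcases (hT.2 _ hmeet hext).2.total ⟨hA.1 hE, inter_subset_left⟩ ⟨hA.1 hF, inter_subset_right⟩
    with hEF | hFE
  · exact hA.2.1 hE hF hne hEF
  · exact hA.2.1 hF hE hne.symm hFE

theorem IsBoxClassTree.isExtClassTree (hempty : cl2 I univ (∅ : Set G) = ∅)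
    (hT : IsBoxClassTree I univ T) : IsExtClassTree I T := by
  refine ⟨fun E hE => ⟨(hT.1 E hE).1, (hT.1 E hE).2.isExtent⟩, fun X ⟨g, hg⟩ _ => ⟨?_, ?_⟩⟩
  · obtain ⟨U, hUT, hU⟩ := (hT.2 univ ⟨g, trivial⟩ (isBoxExtent_univ ⟨g, trivial⟩)).1
    exact ⟨U, hUT, (subset_univ X).trans hU⟩
  · intro E hE F hF hne
    have hEF : (E ∩ F).Nonempty := ⟨g, hE.2 hg, hF.2 hg⟩
    exact (hT.2 _ hEF ((hT.1 E hE.1).2.inter hempty (hT.1 F hF.1).2 hEF)).2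
      ⟨hE.1, inter_subset_left⟩ ⟨hF.1, inter_subset_right⟩ hne

end ClassTrees

theorem completeExtClassTree_iff_boxClassTree_general
    (I : G → M → Prop)
    (hempty : cl2 I Set.univ (∅ : Set G) = ∅)
    (T : Set (Set G)) :
    IsCompleteExtClassTree I T ↔
      ((∀ E ∈ T, IsBoxExtent I Set.univ E) ∧ IsBoxClassTree I Set.univ T ∧
        ∀ A : Set (Set G), IsMaxAntichainIn T A → IsMaxOrthoSystem I A) := by
  constructor
  · rintro ⟨hT, hcov⟩
    have hpart : ∀ A, IsMaxAntichainIn T A → IsExtentPartition I univ A :=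
      fun A hA => hT.isExtentPartition hA (hcov A hA)
    have hbox : ∀ E ∈ T, IsBoxExtent I univ E := fun E hE =>
      let ⟨A, hA, hEA⟩ := exists_isMaxAntichainIn_mem hE
      Or.inl ⟨A, hpart A hA, hEA⟩
    exact ⟨hbox, ⟨fun E hE => ⟨(hT.1 E hE).1, hbox E hE⟩,
      fun X hX hXbox => hT.2 X hX hXbox.isExtent⟩, fun A hA => (hpart A hA).isMaxOrthoSystem⟩
  · rintro ⟨-, hT, hortho⟩
    exact ⟨hT.isExtClassTree hempty, fun A hA => (hortho A hA).sUnion_eq_univ hempty⟩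

/-- A set `T` of nonempty extents is a complete classification tree iff each member is a
box extent, `T` is a classification tree in the box extent lattice, and every maximal
antichain of `(T,⊆)` is a maximal orthogonal system in `B(G,M,I)`. -/
theorem completeExtClassTree_iff_boxClassTree
    [Fintype G] [Fintype M] (I : G → M → Prop)
    (hempty : cl2 I Set.univ (∅ : Set G) = ∅)
    (T : Set (Set G)) (hT : ∀ E ∈ T, E.Nonempty ∧ IsExtent I Set.univ E) :
    IsCompleteExtClassTree I T ↔
      ((∀ E ∈ T, IsBoxExtent I Set.univ E) ∧ IsBoxClassTree I Set.univ T ∧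
        ∀ A : Set (Set G), IsMaxAntichainIn T A → IsMaxOrthoSystem I A) :=
  completeExtClassTree_iff_boxClassTree_general I hempty T
end

section
/- Let (G,M,I) be a finite context with ∅'' = ∅, let H ⊆ G be a nonempty subset, and let E be a box extent of (G,M,I). Then E ∩ H is a box extent of the subcontext (H, M, I ∩ (H×M)). -/
open Set

variable {G M : Type*}

/-- If `E` is a box extent of `(G,M,I)` (with `∅'' = ∅`) and `H ⊆ G` is nonempty, then
`E ∩ H` is a box extent of the subcontext `(H, M, I ∩ H×M)`. -/
theorem boxExtent_inter_subcontext
    [Fintype G] [Fintype M] (I : G → M → Prop)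
    (hempty : cl2 I Set.univ (∅ : Set G) = ∅)
    (H : Set G) (hH : H.Nonempty)
    (E : Set G) (hE : IsBoxExtent I Set.univ E) :
    IsBoxExtent I H (E ∩ H) := by
  have hclH : cl2 I H (∅ : Set G) = (∅ : Set G) := by
    apply Set.eq_empty_of_subset_empty
    intro g hg
    rw [← hempty]
    exact ⟨Set.mem_univ g, hg.2⟩
  rcases hE with ⟨π, ⟨hne, hdisj, hunion, hext⟩, hEπ⟩ | hE
  · rcases Set.eq_empty_or_nonempty (E ∩ H) with h0 | h0
    · right; rw [h0, hclH]
    · left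
      refine ⟨(fun A => A ∩ H) '' {A ∈ π | (A ∩ H).Nonempty}, ⟨?_, ?_, ?_, ?_⟩, ?_⟩
      · rintro X ⟨A, ⟨hA, hAne⟩, rfl⟩
        exact hAne
      · rintro X ⟨A, ⟨hA, -⟩, rfl⟩ Y ⟨B, ⟨hB, -⟩, rfl⟩ hXY
        have hAB : A ≠ B := by rintro rfl; exact hXY rfl
        exact (hdisj hA hB hAB).mono Set.inter_subset_left Set.inter_subset_left
      · ext g
        simp only [Set.mem_sUnion, Set.mem_image, Set.mem_setOf_eq]
        constructor
        · rintro ⟨X, ⟨A, ⟨hA, -⟩, rfl⟩, hg⟩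
          exact hg.2
        · intro hg
          have : g ∈ ⋃₀ π := by rw [hunion]; trivial
          rcases this with ⟨A, hA, hgA⟩
          exact ⟨A ∩ H, ⟨A, ⟨hA, ⟨g, hgA, hg⟩⟩, rfl⟩, hgA, hg⟩
      · rintro X ⟨A, ⟨hA, -⟩, rfl⟩
        refine ⟨Set.inter_subset_right, ?_⟩
        apply Set.Subset.antisymm
        · rintro g ⟨hgH, hgm⟩
          refine ⟨?_, hgH⟩
          have hAext := (hext A hA).2
          rw [← hAext]
          refine ⟨Set.mem_univ g, ?_⟩
          intro m hm
          exact hgm m (fun x hx => hm x hx.1)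
        · rintro g ⟨hgA, hgH⟩
          exact ⟨hgH, fun m hm => hm g ⟨hgA, hgH⟩⟩
      · exact ⟨E, ⟨hEπ, h0⟩, rfl⟩
  · right
    rw [hE, hempty, Set.empty_inter, hclH]
end

section
/- Every finite context (G,M,I) has a finest extent partition: there exists an extent partition π□ of (G,M,I) such that every class of every extent partition of (G,M,I) is a union of classes of π□. -/
open Set

variable {G M : Type*}

lemma cl2_extensive (I : G → M → Prop) (A : Set G) : A ⊆ cl2 I univ A :=
  fun g hg => ⟨trivial, fun _ hm => hm g hg⟩

lemma cl2_mono (I : G → M → Prop) {A B : Set G} (h : A ⊆ B) :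
    cl2 I univ A ⊆ cl2 I univ B :=
  fun g hg => ⟨trivial, fun m hm => hg.2 m (fun x hx => hm x (h hx))⟩

lemma extent_sInter (I : G → M → Prop) (F : Set (Set G))
    (h : ∀ A ∈ F, IsExtent I univ A) : IsExtent I univ (⋂₀ F) := by
  refine ⟨subset_univ _, subset_antisymm ?_ (cl2_extensive I _)⟩
  intro x hx
  rw [mem_sInter]
  intro A hA
  have hx' := cl2_mono I (sInter_subset_of_mem hA) hx
  rwa [(h A hA).2] at hx'

/-- Every finite context has a finest extent partition. -/
theorem exists_finest_extentPartition
    [Fintype G] [Fintype M] (I : G → M → Prop) :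
    ∃ π : Set (Set G), IsFinestExtentPartition I Set.univ π := by
  classical
  -- family of all classes containing g
  set Fam : G → Set (Set G) :=
    fun g => {A | ∃ σ, IsExtentPartition I univ σ ∧ A ∈ σ ∧ g ∈ A} with hFam
  set C : G → Set G := fun g => ⋂₀ Fam g with hC
  have hmemC : ∀ g, g ∈ C g := by
    intro g
    rw [hC, mem_sInter]
    rintro A ⟨σ, _, _, hg⟩
    exact hg
  have hCsub : ∀ {g A σ}, IsExtentPartition I univ σ → A ∈ σ → g ∈ A → C g ⊆ A := by
    intro g A σ hσ hA hg
    exact sInter_subset_of_mem ⟨σ, hσ, hA, hg⟩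
  -- if C g and C h share a point, then C g = C h
  have hkey : ∀ {g h x}, x ∈ C g → x ∈ C h → C g = C h := by
    have main : ∀ {g h x}, x ∈ C g → x ∈ C h → Fam g ⊆ Fam h := by
      rintro g h x hxg hxh A ⟨σ, hσ, hA, hgA⟩
      obtain ⟨B, hB, hhB⟩ : ∃ B ∈ σ, h ∈ B := by
        have : h ∈ ⋃₀ σ := by rw [hσ.2.2.1]; trivial
        exact this
      have hxA : x ∈ A := hCsub hσ hA hgA hxg
      have hxB : x ∈ B := hCsub hσ hB hhB hxh
      have hAB : A = B := by
        by_contra hne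
        exact (hσ.2.1 hA hB hne).le_bot ⟨hxA, hxB⟩
      exact ⟨σ, hσ, hA, hAB ▸ hhB⟩
    intro g h x hxg hxh
    simp only [hC]
    rw [subset_antisymm (main hxg hxh) (main hxh hxg)]
  refine ⟨Set.range C, ⟨?_, ?_, ?_, ?_⟩, ?_⟩
  · rintro A ⟨g, rfl⟩
    exact ⟨g, hmemC g⟩
  · rintro A ⟨g, rfl⟩ B ⟨h, rfl⟩ hne
    rw [Set.disjoint_left]
    intro x hxg hxh
    exact hne (hkey hxg hxh)
  · apply eq_univ_of_forall
    intro g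
    exact ⟨C g, ⟨g, rfl⟩, hmemC g⟩
  · rintro A ⟨g, rfl⟩
    apply extent_sInter
    rintro A ⟨σ, hσ, hA, _⟩
    exact hσ.2.2.2 A hA
  · intro σ hσ A hA
    refine ⟨C '' A, ?_, ?_⟩
    · rintro B ⟨g, _, rfl⟩; exact ⟨g, rfl⟩
    · apply subset_antisymm
      · intro g hg
        exact ⟨C g, ⟨g, hg, rfl⟩, hmemC g⟩
      · rintro x ⟨B, ⟨g, hg, rfl⟩, hx⟩
        exact hCsub hσ hA hg hx
end

section
/- Let (G,M,I) be a finite context with ∅'' = ∅ and let π□ be its finest extent partition. Then the minimal nonempty box extents of (G,M,I) (the atoms of the box extent lattice B(G,M,I)) are exactly the classes of π□, and every box extent of (G,M,I) is a union of classes of π□; in particular B(G,M,I), ordered by inclusion, is atomistic. -/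
open Set

variable {G M : Type*}

/-- The minimal nonempty box extents (atoms of the box extent lattice `B(G,M,I)`)
are exactly the classes of the finest extent partition, and every box extent is a
union of such classes; in particular `B(G,M,I)` is atomistic. -/
theorem boxExtent_atoms_eq_finest_classes
    [Fintype G] [Fintype M] (I : G → M → Prop)
    (hempty : cl2 I Set.univ (∅ : Set G) = ∅)
    (π : Set (Set G)) (hπ : IsFinestExtentPartition I Set.univ π) :
    (∀ E : Set G,
      (E.Nonempty ∧ IsBoxExtent I Set.univ E ∧
        ∀ F : Set G, F.Nonempty → IsBoxExtent I Set.univ F → F ⊆ E → F = E) ↔ E ∈ π) ∧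
    (∀ E : Set G, IsBoxExtent I Set.univ E → ∃ S ⊆ π, E = ⋃₀ S) := by
  obtain ⟨hπpart, hfine⟩ := hπ
  obtain ⟨hne, hdisj, hcover, hext⟩ := hπpart
  have hbox : ∀ E, IsBoxExtent I Set.univ E → ∃ S ⊆ π, E = ⋃₀ S := by
    intro E hE
    rcases hE with ⟨σ, hσ, hEσ⟩ | hE
    · exact hfine σ hσ E hEσ
    · exact ⟨∅, empty_subset _, by simp [hE, hempty]⟩
  refine ⟨?_, hbox⟩
  intro E
  constructor
  · rintro ⟨hEne, hEbox, hmin⟩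
    obtain ⟨S, hSπ, hES⟩ := hbox E hEbox
    obtain ⟨g, hg⟩ := hEne
    rw [hES] at hg
    obtain ⟨A, hAS, hgA⟩ := hg
    have hAπ : A ∈ π := hSπ hAS
    have hAbox : IsBoxExtent I Set.univ A := Or.inl ⟨π, ⟨hne, hdisj, hcover, hext⟩, hAπ⟩
    have hAE : A ⊆ E := hES ▸ subset_sUnion_of_mem hAS
    have := hmin A (hne A hAπ) hAbox hAE
    rwa [← this]
  · intro hEπ
    refine ⟨hne E hEπ, Or.inl ⟨π, ⟨hne, hdisj, hcover, hext⟩, hEπ⟩, ?_⟩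
    intro F hFne hFbox hFE
    obtain ⟨S, hSπ, hFS⟩ := hbox F hFbox
    obtain ⟨g, hg⟩ := hFne
    have hg' := hg
    rw [hFS] at hg'
    obtain ⟨A, hAS, hgA⟩ := hg'
    have hAπ : A ∈ π := hSπ hAS
    have hAE : A = E := by
      by_contra hne'
      exact Set.disjoint_left.mp (hdisj hAπ hEπ hne') hgA (hFE hg)
    have hAF : A ⊆ F := hFS ▸ subset_sUnion_of_mem hAS
    exact subset_antisymm hFE (hAE ▸ hAF)
end

section
/- Let (G,M,I) be a finite context with ∅'' = ∅, let π□ be its finest extent partition, and for g ∈ G let g^□□ denote the class of π□ containing g. Then an extent E of (G,M,I) is a box extent of (G,M,I) if and only if for every g ∈ E one has g^□□ ⊆ E. -/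
open Set

variable {G M : Type*}

/-- An extent `E` of `(G,M,I)` is a box extent iff it contains, together with each of
its elements `g`, the whole class `g^□□` of the finest extent partition containing `g`. -/
theorem boxExtent_iff_union_of_finest_classes
    [Fintype G] [Fintype M] (I : G → M → Prop)
    (hempty : cl2 I Set.univ (∅ : Set G) = ∅)
    (π : Set (Set G)) (hπ : IsFinestExtentPartition I Set.univ π)
    (E : Set G) (hE : IsExtent I Set.univ E) :
    IsBoxExtent I Set.univ E ↔ ∀ g ∈ E, ∀ A ∈ π, g ∈ A → A ⊆ E := by
  obtain ⟨⟨hne, hdisj, hcover, hext⟩, hfin⟩ := hπ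
  constructor
  · rintro (⟨σ, hσ, hEσ⟩ | hEempty)
    · obtain ⟨S, hSπ, hES⟩ := hfin σ hσ E hEσ
      intro g hg A hA hgA
      rw [hES] at hg ⊢
      obtain ⟨A', hA'S, hgA'⟩ := hg
      rcases eq_or_ne A A' with rfl | hne'
      · exact fun x hx => ⟨A, hA'S, hx⟩
      · exact absurd hgA' (Set.disjoint_left.mp (hdisj hA (hSπ hA'S) hne') hgA)
    · intro g hg
      rw [hEempty, hempty] at hg
      exact absurd hg (notMem_empty g)
  · intro hcond
    rcases eq_or_ne E ∅ with rfl | hEne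
    · exact Or.inr hempty.symm
    · left
      refine ⟨insert E {A ∈ π | Disjoint A E}, ⟨?_, ?_, ?_, ?_⟩, mem_insert _ _⟩
      · rintro A (rfl | ⟨hAπ, _⟩)
        · exact nonempty_iff_ne_empty.mpr hEne
        · exact hne A hAπ
      · rintro a (rfl | ⟨haπ, had⟩) b (rfl | ⟨hbπ, hbd⟩) hab
        · exact absurd rfl hab
        · exact hbd.symm
        · exact had
        · exact hdisj haπ hbπ hab
      · apply eq_univ_of_forall
        intro g
        have : g ∈ ⋃₀ π := hcover ▸ mem_univ g
        obtain ⟨A, hAπ, hgA⟩ := this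
        by_cases hd : Disjoint A E
        · exact ⟨A, Or.inr ⟨hAπ, hd⟩, hgA⟩
        · obtain ⟨g', hg'A, hg'E⟩ := not_disjoint_iff.mp hd
          exact ⟨E, Or.inl rfl, hcond g' hg'E A hAπ hg'A hgA⟩
      · rintro A (rfl | ⟨hAπ, _⟩)
        · exact hE
        · exact hext A hAπ
end

section
/- Let (G,M,I) be a finite context with ∅'' = ∅, let z ∈ G and H = G ∖ {z}, let π□ be the finest extent partition of (G,M,I), let z^□□ be the class of π□ containing z, and assume z^□□ ≠ {z}. Let T be a classification tree in the box extent lattice B(H, M, I ∩ (H×M)) of the subcontext. Then T⁽¹⁾ = {E ∈ T : E is a box extent of (G,M,I)} is an order ideal of (T, ⊆) (i.e., if E ∈ T⁽¹⁾, F ∈ T and F ⊆ E then F ∈ T⁽¹⁾), T⁽²⁾ = {E ∈ T : E ∪ {z} is a box extent of (G,M,I)} is a chain under inclusion, and T⁽¹⁾ ∩ T⁽²⁾ = ∅. -/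
open Set

variable {G M : Type*}

lemma my_cl2_univ_inter (I : G → M → Prop) (H A : Set G) :
    cl2 I H A = cl2 I Set.univ A ∩ H := by
  ext g; simp [cl2, polarDown]; tauto

lemma my_subset_cl2 (I : G → M → Prop) {H A : Set G} (h : A ⊆ H) :
    A ⊆ cl2 I H A :=
  fun g hg => ⟨h hg, fun m hm => hm g hg⟩

lemma my_cl2_mono (I : G → M → Prop) (H : Set G) {A B : Set G} (h : A ⊆ B) :
    cl2 I H A ⊆ cl2 I H B :=
  fun g hg => ⟨hg.1, fun m hm => hg.2 m (fun x hx => hm x (h hx))⟩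

lemma my_extent_inter (I : G → M → Prop) {H A B : Set G}
    (hA : IsExtent I H A) (hB : IsExtent I H B) : IsExtent I H (A ∩ B) := by
  refine ⟨fun g hg => hA.1 hg.1, Set.Subset.antisymm ?_ ?_⟩
  · intro g hg
    exact ⟨hA.2 ▸ my_cl2_mono I H Set.inter_subset_left hg,
           hB.2 ▸ my_cl2_mono I H Set.inter_subset_right hg⟩
  · exact my_subset_cl2 I (fun g hg => hA.1 hg.1)

lemma my_class_eq {π : Set (Set G)} (hdisj : π.Pairwise Disjoint)
    {C D : Set G} (hC : C ∈ π) (hD : D ∈ π)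
    {g : G} (hgC : g ∈ C) (hgD : g ∈ D) : C = D := by
  by_contra h
  exact Set.disjoint_left.mp (hdisj hC hD h) hgC hgD

lemma my_refinement (I : G → M → Prop) {H : Set G} {σ τ : Set (Set G)}
    (hσ : IsExtentPartition I H σ) (hτ : IsExtentPartition I H τ) :
    IsExtentPartition I H {D | ∃ A ∈ σ, ∃ B ∈ τ, D = A ∩ B ∧ D.Nonempty} := by
  refine ⟨?_, ?_, ?_, ?_⟩
  · rintro A ⟨A', -, B', -, rfl, hne⟩; exact hne
  · rintro D ⟨A, hA, B, hB, rfl, -⟩ D' ⟨A', hA', B', hB', rfl, -⟩ hne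
    rw [Set.disjoint_left]
    intro g hg hg'
    have hAA : A = A' := my_class_eq hσ.2.1 hA hA' hg.1 hg'.1
    have hBB : B = B' := my_class_eq hτ.2.1 hB hB' hg.2 hg'.2
    exact hne (by rw [hAA, hBB])
  · apply Set.Subset.antisymm
    · rintro g ⟨D, ⟨A, hA, B, hB, rfl, -⟩, hg⟩
      exact (hσ.2.2.2 A hA).1 hg.1
    · intro g hg
      obtain ⟨A, hA, hgA⟩ : ∃ A ∈ σ, g ∈ A := by
        have h := hσ.2.2.1; rw [← h] at hg; exact hg
      obtain ⟨B, hB, hgB⟩ : ∃ B ∈ τ, g ∈ B := by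
        have h := hτ.2.2.1; rw [← h] at hg; exact hg
      exact ⟨A ∩ B, ⟨A, hA, B, hB, rfl, ⟨g, hgA, hgB⟩⟩, hgA, hgB⟩
  · rintro D ⟨A, hA, B, hB, rfl, -⟩
    exact my_extent_inter I (hσ.2.2.2 A hA) (hτ.2.2.2 B hB)

lemma my_box_pieces (I : G → M → Prop) {π : Set (Set G)}
    (hπ : IsFinestExtentPartition I Set.univ π)
    (hempty : cl2 I Set.univ (∅ : Set G) = ∅) {E : Set G}
    (hE : IsBoxExtent I Set.univ E) (hEne : E.Nonempty) :
    IsExtent I Set.univ E ∧ ∀ C ∈ π, (C ∩ E).Nonempty → C ⊆ E := by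
  rcases hE with ⟨σ, hσ, hEσ⟩ | h
  · refine ⟨hσ.2.2.2 E hEσ, ?_⟩
    obtain ⟨S, hSπ, hES⟩ := hπ.2 σ hσ E hEσ
    rintro C hC ⟨g, hgC, hgE⟩
    rw [hES] at hgE ⊢
    obtain ⟨C', hC', hgC'⟩ := hgE
    have hCC : C = C' := my_class_eq hπ.1.2.1 hC (hSπ hC') hgC hgC'
    exact hCC ▸ Set.subset_sUnion_of_mem hC'
  · rw [h, hempty] at hEne
    exact absurd hEne (by simp)

/-- Let `H = G ∖ {z}`, `Z = z^□□ ≠ {z}`, and `T` a classification tree in the box extent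
lattice of the subcontext. Then `T⁽¹⁾ = {E ∈ T | E ∈ B(G,M,I)}` is an order ideal of
`(T,⊆)`, `T⁽²⁾ = {E ∈ T | E ∪ {z} ∈ B(G,M,I)}` is a chain under inclusion, and
`T⁽¹⁾ ∩ T⁽²⁾ = ∅`. -/
theorem treeParts_one_object_extension
    [Fintype G] [Fintype M] (I : G → M → Prop)
    (hempty : cl2 I Set.univ (∅ : Set G) = ∅)
    (z : G) (π : Set (Set G)) (hπ : IsFinestExtentPartition I Set.univ π)
    (Z : Set G) (hZ : Z ∈ π) (hzZ : z ∈ Z) (hZne : Z ≠ {z})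
    (T : Set (Set G)) (hT : IsBoxClassTree I (Set.univ \ {z}) T) :
    (∀ E ∈ {E ∈ T | IsBoxExtent I Set.univ E}, ∀ F ∈ T, F ⊆ E →
        F ∈ {E ∈ T | IsBoxExtent I Set.univ E}) ∧
    IsChain (· ⊆ ·) {E ∈ T | IsBoxExtent I Set.univ (E ∪ {z})} ∧
    {E ∈ T | IsBoxExtent I Set.univ E} ∩
      {E ∈ T | IsBoxExtent I Set.univ (E ∪ {z})} = ∅ := by
  set H : Set G := Set.univ \ {z} with hH
  have hclH : cl2 I H ∅ = ∅ := by
    rw [my_cl2_univ_inter, hempty, Set.empty_inter]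
  -- every element of T is a nonempty class of an extent partition of H
  have hboxH : ∀ E ∈ T, E.Nonempty ∧ ∃ τ, IsExtentPartition I H τ ∧ E ∈ τ := by
    intro E hE
    obtain ⟨hne, hbox⟩ := hT.1 E hE
    rcases hbox with ⟨τ, hτ, hEτ⟩ | h
    · exact ⟨hne, τ, hτ, hEτ⟩
    · rw [h, hclH] at hne
      exact absurd hne (by simp)
  have hsubH : ∀ {τ : Set (Set G)} {E : Set G},
      IsExtentPartition I H τ → E ∈ τ → E ⊆ H := by
    intro τ E hτ hE
    rw [← hτ.2.2.1]
    exact Set.subset_sUnion_of_mem hE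
  -- a witness w ∈ Z, w ≠ z
  obtain ⟨w, hwZ, hwz⟩ : ∃ w ∈ Z, w ≠ z := by
    by_contra h
    push_neg at h
    exact hZne (Set.Subset.antisymm (fun x hx => h x hx)
      (Set.singleton_subset_iff.mpr hzZ))
  -- if E∪{z} is a box extent of G then Z∖{z} ⊆ E
  have hZsub : ∀ E : Set G, IsBoxExtent I Set.univ (E ∪ {z}) → Z \ {z} ⊆ E := by
    intro E hbox
    have hp := (my_box_pieces I hπ hempty hbox ⟨z, Set.mem_union_right _ rfl⟩).2
      Z hZ ⟨z, hzZ, Set.mem_union_right _ rfl⟩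
    intro x hx
    rcases hp hx.1 with h | h
    · exact h
    · exact absurd h hx.2
  -- Part 1 : order ideal
  have part1 : ∀ E ∈ T, IsBoxExtent I Set.univ E → ∀ F ∈ T, F ⊆ E →
      IsBoxExtent I Set.univ F := by
    intro E hET hEbox F hFT hFE
    obtain ⟨hEne, τE, hτE, hEτE⟩ := hboxH E hET
    obtain ⟨hFne, τ, hτ, hFτ⟩ := hboxH F hFT
    have hEH : E ⊆ H := hsubH hτE hEτE
    obtain ⟨hEext, hpp⟩ := my_box_pieces I hπ hempty hEbox hEne
    have hclE : cl2 I Set.univ E = E := hEext.2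
    -- anything inside E that is an extent of H is an extent of G
    have key : ∀ D : Set G, cl2 I H D = D → D ⊆ E → cl2 I Set.univ D = D := by
      intro D hD hDE
      have h1 : cl2 I Set.univ D ⊆ E := hclE ▸ my_cl2_mono I _ hDE
      have h2 : cl2 I Set.univ D ∩ H = D := by rw [← my_cl2_univ_inter]; exact hD
      calc cl2 I Set.univ D = cl2 I Set.univ D ∩ H :=
            (Set.inter_eq_left.mpr (h1.trans hEH)).symm
        _ = D := h2
    have hFinE : F ∩ E = F := Set.inter_eq_left.mpr hFE
    set σ' : Set (Set G) :=
      insert F ({D | ∃ B ∈ τ, D = B ∩ E ∧ D ≠ F ∧ D.Nonempty} ∪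
        {C | C ∈ π ∧ C ∩ E = ∅}) with hσ'
    have hmem : ∀ A, A ∈ σ' ↔ A = F ∨ (∃ B ∈ τ, A = B ∩ E ∧ A ≠ F ∧ A.Nonempty) ∨
        (A ∈ π ∧ A ∩ E = ∅) := by
      intro A
      simp only [hσ', Set.mem_insert_iff, Set.mem_union, Set.mem_setOf_eq]
    left
    refine ⟨σ', ⟨?_, ?_, ?_, ?_⟩, Set.mem_insert _ _⟩
    · -- nonempty classes
      intro A hA
      rcases (hmem A).mp hA with rfl | ⟨B, hB, rfl, -, hne⟩ | ⟨hCπ, -⟩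
      · exact hFne
      · exact hne
      · exact hπ.1.1 A hCπ
    · -- pairwise disjoint
      have dFD : ∀ B ∈ τ, B ∩ E ≠ F → Disjoint F (B ∩ E) := by
        intro B hB hBF
        rw [Set.disjoint_left]
        intro g hgF hgBE
        have hBFeq : B = F := my_class_eq hτ.2.1 hB hFτ hgBE.1 hgF
        rw [hBFeq, hFinE] at hBF
        exact hBF rfl
      have dFC : ∀ C, C ∩ E = ∅ → Disjoint F C := by
        intro C hCE
        rw [Set.disjoint_left]
        intro g hgF hgC
        exact absurd (Set.mem_inter hgC (hFE hgF)) (by rw [hCE]; exact id)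
      intro A hA A' hA' hAA'
      rcases (hmem A).mp hA with rfl | ⟨B, hB, rfl, hne, -⟩ | ⟨hCπ, hCE⟩ <;>
        rcases (hmem A').mp hA' with h' | ⟨B', hB', h', hne', -⟩ | ⟨hCπ', hCE'⟩
      · exact absurd h' hAA'.symm
      · exact h' ▸ dFD B' hB' (h' ▸ hne')
      · exact dFC A' hCE'
      · rw [h']; exact (dFD B hB hne).symm
      · rw [Set.disjoint_left]
        intro g hg hg'
        rw [h'] at hg'
        have : B = B' := my_class_eq hτ.2.1 hB hB' hg.1 hg'.1
        exact hAA' (by rw [this, h'])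
      · rw [Set.disjoint_left]
        intro g hg hg'
        exact absurd (Set.mem_inter hg' hg.2) (by rw [hCE']; exact id)
      · rw [h']; exact (dFC A hCE).symm
      · rw [Set.disjoint_left]
        intro g hg hg'
        rw [h'] at hg'
        exact absurd (Set.mem_inter hg hg'.2) (by rw [hCE]; exact id)
      · exact hπ.1.2.1 hCπ hCπ' hAA'
    · -- union is univ
      apply Set.Subset.antisymm (Set.subset_univ _)
      rintro g -
      by_cases hgE : g ∈ E
      · by_cases hgF : g ∈ F
        · exact ⟨F, Set.mem_insert _ _, hgF⟩
        · obtain ⟨B, hB, hgB⟩ : ∃ B ∈ τ, g ∈ B := by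
            have h := hτ.2.2.1; rw [← h] at hEH; exact hEH hgE
          refine ⟨B ∩ E, (hmem _).mpr (Or.inr (Or.inl ⟨B, hB, rfl, ?_, ⟨g, hgB, hgE⟩⟩)),
            hgB, hgE⟩
          intro h
          exact hgF (h ▸ Set.mem_inter hgB hgE)
      · obtain ⟨C, hCπ, hgC⟩ : ∃ C ∈ π, g ∈ C := by
          have h := hπ.1.2.2.1
          have : g ∈ ⋃₀ π := by rw [h]; trivial
          exact this
        refine ⟨C, (hmem _).mpr (Or.inr (Or.inr ⟨hCπ, ?_⟩)), hgC⟩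
        by_contra hne
        exact hgE (hpp C hCπ (Set.nonempty_iff_ne_empty.mpr hne) hgC)
    · -- all classes are extents of G
      intro A hA
      rcases (hmem A).mp hA with rfl | ⟨B, hB, rfl, -, -⟩ | ⟨hCπ, -⟩
      · exact ⟨Set.subset_univ _, key A (hτ.2.2.2 A hFτ).2 hFE⟩
      · have hEextH : IsExtent I H E :=
          ⟨hEH, by rw [my_cl2_univ_inter, hclE, Set.inter_eq_left.mpr hEH]⟩
        exact ⟨Set.subset_univ _,
          key (B ∩ E) (my_extent_inter I (hτ.2.2.2 B hB) hEextH).2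
            Set.inter_subset_right⟩
      · exact hπ.1.2.2.2 A hCπ
  refine ⟨?_, ?_, ?_⟩
  · -- order ideal
    rintro E ⟨hET, hEbox⟩ F hFT hFE
    exact ⟨hFT, part1 E hET hEbox F hFT hFE⟩
  · -- chain
    rintro E ⟨hET, hEbox⟩ F ⟨hFT, hFbox⟩ hEF
    obtain ⟨hEne, τE, hτE, hEτE⟩ := hboxH E hET
    obtain ⟨hFne, τF, hτF, hFτF⟩ := hboxH F hFT
    have hwE : w ∈ E := hZsub E hEbox ⟨hwZ, hwz⟩
    have hwF : w ∈ F := hZsub F hFbox ⟨hwZ, hwz⟩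
    have hXne : (E ∩ F).Nonempty := ⟨w, hwE, hwF⟩
    have hXbox : IsBoxExtent I H (E ∩ F) :=
      Or.inl ⟨_, my_refinement I hτE hτF, ⟨E, hEτE, F, hFτF, rfl, hXne⟩⟩
    obtain ⟨-, hchain⟩ := hT.2 (E ∩ F) hXne hXbox
    exact hchain ⟨hET, Set.inter_subset_left⟩ ⟨hFT, Set.inter_subset_right⟩ hEF
  · -- disjointness
    apply Set.eq_empty_iff_forall_notMem.mpr
    rintro A ⟨⟨hAT, hAbox⟩, -, hAzbox⟩
    obtain ⟨hAne, τA, hτA, hAτA⟩ := hboxH A hAT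
    have hAH : A ⊆ H := hsubH hτA hAτA
    have hwA : w ∈ A := hZsub A hAzbox ⟨hwZ, hwz⟩
    have hZA : Z ⊆ A :=
      (my_box_pieces I hπ hempty hAbox hAne).2 Z hZ ⟨w, hwZ, hwA⟩
    exact (hAH (hZA hzZ)).2 rfl
end
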